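/- Let n ≥ 2 and let P = [2] × K_{n−1}; identify lower sets of P with pairs (I_1, I_2) of lower sets of K_{n−1} with I_2 ⊆ I_1, and let L_0, …, L_{2n−1} denote the rank-level lower sets of K_{n−1}. Then for every i with 0 ≤ i ≤ n−1, the orbit of the lower set (L_i, L_i) under the reverse operator 𝔛 of P has exactly 2n+1 elements; moreover 𝔛^{2n+1}(L_i, L_i) = (L_i, L_i). -/

import Mathlib

/-- The reverse operator `𝔛` on lower sets of a poset: the lower set generated by
the minimal elements of the complement. -/
def XRev {α : Type*} [PartialOrder α] (I : Set α) : Set α :=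
  {x | ∃ y, Minimal (fun z => z ∈ Iᶜ) y ∧ x ≤ y}

/-- The `𝔛`-orbit of a lower set `I` of a finite poset (forward iteration; since
`𝔛` is a bijection on lower sets of a finite poset, this is the full orbit). -/
def XOrbit {α : Type*} [PartialOrder α] (I : Set α) : Set (Set α) :=
  {J | ∃ k : ℕ, XRev^[k] I = J}

/-- The lower set of `[2] × P` corresponding to a pair `(I₁, I₂)` of lower sets
of `P` with `I₂ ⊆ I₁`: coordinate `0` (the bottom of the chain `[2]`) carries
`I₁` and coordinate `1` carries `I₂`. -/
def pairSet {β : Type*} (I₁ I₂ : Set β) : Set (Fin 2 × β) :=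
  {p | if p.1 = 0 then p.2 ∈ I₁ else p.2 ∈ I₂}

/-- The poset `K_{n-1} = [n-1] ⊕ ([1] ⊔ [1]) ⊕ [n-1]`, realized as pairs
`(rank, tag)` with `1 ≤ rank ≤ 2n-1`, where only rank `n` carries two elements
(tags `false` for `n` and `true` for `n′`). -/
def KType (n : ℕ) : Type :=
  {p : ℕ × Bool // 1 ≤ p.1 ∧ p.1 ≤ 2 * n - 1 ∧ (p.1 ≠ n → p.2 = false)}

/-- In `K_{n-1}`, `x ≤ y` iff `x = y` or `x` has strictly smaller rank. -/
instance (n : ℕ) : PartialOrder (KType n) where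
  le x y := x = y ∨ x.1.1 < y.1.1
  le_refl x := Or.inl rfl
  le_trans x y z hxy hyz := by
    rcases hxy with rfl | h
    · exact hyz
    · rcases hyz with rfl | h'
      · exact Or.inr h
      · exact Or.inr (h.trans h')
  le_antisymm x y hxy hyx := by
    rcases hxy with rfl | h
    · rfl
    · rcases hyx with rfl | h'
      · rfl
      · omega

/-- The rank-level lower set `L_j` of `K_{n-1}`. -/
def KL (n : ℕ) (j : ℕ) : Set (KType n) := {x | x.1.1 ≤ j}

/-- The lower set `I_n = {1, …, n-1, n}` of `K_{n-1}`. -/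
def KIn (n : ℕ) : Set (KType n) := {x | x.1.1 < n ∨ x.1 = (n, false)}

/-- The lower set `I_{n′} = {1, …, n-1, n′}` of `K_{n-1}`. -/
def KIn' (n : ℕ) : Set (KType n) := {x | x.1.1 < n ∨ x.1 = (n, true)}

/-! Lower sets of the form `(L_a, L_b)` are closed under `𝔛`: the minimal elements of the
complement are the elements of rank `a + 1` in the bottom copy of `K_{n-1}` and, when `b < a`,
those of rank `b + 1` in the top copy. So `𝔛` acts on the index pairs by the explicit map
`revStep N`, `N = 2n - 1`. From a diagonal pair `(j, j)` this map passes through `(j + k, k - 1)`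
and first returns to the diagonal at `(N - j, N - j)`, after `N - j + 1` steps. Two such passages
bring `(i, i)` back after `N + 2 = 2n + 1` steps, and since `i ≠ N - i` it cannot return earlier. -/

open Function Set

theorem ncard_setOf_iterate_eq_minimalPeriod {α : Type*} {f : α → α} {x : α}
    (hx : x ∈ periodicPts f) : {y | ∃ k, f^[k] x = y}.ncard = minimalPeriod f x := by
  have horbit : {y | ∃ k, f^[k] x = y} = (f^[·] x) '' Iio (minimalPeriod f x) := by
    ext y
    constructor
    · rintro ⟨k, rfl⟩
      exact ⟨k % minimalPeriod f x, Nat.mod_lt _ (minimalPeriod_pos_of_mem_periodicPts hx),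
        iterate_mod_minimalPeriod_eq⟩
    · rintro ⟨k, -, rfl⟩
      exact ⟨k, rfl⟩
  rw [horbit, iterate_injOn_Iio_minimalPeriod.ncard_image, ncard_Iio_nat]

theorem pairSet_inj {β : Type*} {I₁ I₂ J₁ J₂ : Set β} :
    pairSet I₁ I₂ = pairSet J₁ J₂ ↔ I₁ = J₁ ∧ I₂ = J₂ := by
  refine ⟨fun h => ⟨ext fun x => ?_, ext fun x => ?_⟩, fun ⟨h₁, h₂⟩ => h₁ ▸ h₂ ▸ rfl⟩
  · simpa [pairSet] using congrArg ((0, x) ∈ ·) h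
  · simpa [pairSet] using congrArg ((1, x) ∈ ·) h

section pairSet

variable {β : Type*} [PartialOrder β] {I₁ I₂ : Set β} {x : β}

theorem minimal_compl_pairSet_zero_iff :
    Minimal (· ∈ (pairSet I₁ I₂)ᶜ) ((0 : Fin 2), x) ↔ Minimal (· ∈ I₁ᶜ) x := by
  constructor
  · rintro ⟨hx, hmin⟩
    exact ⟨hx, fun w hw hwx => (hmin (y := (0, w)) hw ⟨le_rfl, hwx⟩).2⟩
  · rintro ⟨hx, hmin⟩
    refine ⟨hx, ?_⟩
    rintro ⟨d, w⟩ hw ⟨hd, hwx⟩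
    obtain rfl : d = 0 := Fin.le_zero_iff.mp hd
    exact ⟨le_rfl, hmin hw hwx⟩

theorem minimal_compl_pairSet_one_iff (hI₁ : IsLowerSet I₁) :
    Minimal (· ∈ (pairSet I₁ I₂)ᶜ) ((1 : Fin 2), x) ↔ x ∈ I₁ ∧ Minimal (· ∈ I₂ᶜ) x := by
  constructor
  · rintro ⟨hx, hmin⟩
    refine ⟨by_contra fun hx₁ => ?_, hx, fun w hw hwx => (hmin (y := (1, w)) hw ⟨le_rfl, hwx⟩).2⟩
    exact absurd (hmin (y := (0, x)) hx₁ ⟨Fin.zero_le _, le_rfl⟩).1 (by simp)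
  · rintro ⟨hx₁, hx, hmin⟩
    refine ⟨hx, ?_⟩
    rintro ⟨d, w⟩ hw ⟨-, hwx⟩
    fin_cases d
    · exact absurd (hI₁ hwx hx₁) hw
    · exact ⟨le_rfl, hmin hw hwx⟩

theorem XRev_pairSet (hI₁ : IsLowerSet I₁) :
    XRev (pairSet I₁ I₂) =
      pairSet (XRev I₁ ∪ {u | ∃ y ∈ I₁, Minimal (· ∈ I₂ᶜ) y ∧ u ≤ y})
        {u | ∃ y ∈ I₁, Minimal (· ∈ I₂ᶜ) y ∧ u ≤ y} := by
  ext ⟨c, u⟩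
  simp only [XRev, mem_ofPred_eq, Prod.exists, Fin.exists_fin_two, Prod.mk_le_mk,
    minimal_compl_pairSet_zero_iff, minimal_compl_pairSet_one_iff hI₁, and_assoc]
  fin_cases c <;> simp [pairSet]

end pairSet

namespace KType

variable {n : ℕ}

theorem rank_le_of_le {x y : KType n} (h : x ≤ y) : x.1.1 ≤ y.1.1 := by
  rcases h with rfl | h
  exacts [le_rfl, h.le]

theorem exists_rank_eq {r : ℕ} (h₁ : 1 ≤ r) (h₂ : r ≤ 2 * n - 1) : ∃ y : KType n, y.1.1 = r :=
  ⟨⟨(r, false), h₁, h₂, fun _ => rfl⟩, rfl⟩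

theorem exists_rank_eq_and_le_iff {u : KType n} {r : ℕ} :
    (∃ y : KType n, y.1.1 = r ∧ u ≤ y) ↔ u.1.1 ≤ r ∧ r ≤ 2 * n - 1 := by
  constructor
  · rintro ⟨y, rfl, huy⟩
    exact ⟨rank_le_of_le huy, y.2.2.1⟩
  · rintro ⟨hur, hr⟩
    rcases hur.eq_or_lt with hur | hur
    · exact ⟨u, hur, le_rfl⟩
    · obtain ⟨y, hy⟩ := exists_rank_eq (n := n) (by have := u.2.1; omega) hr
      exact ⟨y, hy, Or.inr (hy ▸ hur)⟩

end KType

open KType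

section levels

variable {n : ℕ}

theorem isLowerSet_KL (a : ℕ) : IsLowerSet (KL n a) :=
  fun _ _ hyx hx => (rank_le_of_le hyx).trans hx

theorem KL_union_KL (a b : ℕ) : KL n a ∪ KL n b = KL n (max a b) := by
  ext x
  simp [KL]

theorem KL_injOn : InjOn (KL n) (Iic (2 * n - 1)) := by
  intro a (ha : a ≤ 2 * n - 1) b (hb : b ≤ 2 * n - 1) h
  wlog hab : a < b generalizing a b
  · by_contra hne
    exact hne (this hb ha h.symm (by omega)).symm
  obtain ⟨y, hy⟩ := exists_rank_eq (n := n) (by omega) hb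
  have hyb : y ∈ KL n b := hy.le
  rw [← h] at hyb
  exact absurd hyb (by simp [KL]; omega)

theorem minimal_compl_KL_iff {a : ℕ} {x : KType n} :
    Minimal (· ∈ (KL n a)ᶜ) x ↔ x.1.1 = a + 1 := by
  constructor
  · rintro ⟨hx, hmin⟩
    simp only [mem_compl_iff, KL, mem_ofPred_eq, not_le] at hx
    by_contra hne
    obtain ⟨y, hy⟩ := exists_rank_eq (n := n) (r := a + 1) (by omega) (by have := x.2.2.1; omega)
    have := rank_le_of_le (hmin (y := y) (by simp [KL, hy]) (Or.inr (by omega)))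
    omega
  · intro hx
    refine ⟨by simp [KL, hx], fun y hy hyx => ?_⟩
    rcases hyx with rfl | hyx
    · exact le_rfl
    · exact absurd hy (by simp [KL]; omega)

theorem XRev_KL (a : ℕ) : XRev (KL n a) = KL n (if a < 2 * n - 1 then a + 1 else 0) := by
  ext u
  simp only [XRev, mem_ofPred_eq, minimal_compl_KL_iff, exists_rank_eq_and_le_iff]
  simp only [KL, mem_ofPred_eq]
  have := u.2.1
  split_ifs <;> omega

theorem setOf_le_minimal_compl_KL_mem_KL {a b : ℕ} (ha : a ≤ 2 * n - 1) :
    {u | ∃ y ∈ KL n a, Minimal (· ∈ (KL n b)ᶜ) y ∧ u ≤ y} = KL n (if b < a then b + 1 else 0) := by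
  ext u
  simp only [minimal_compl_KL_iff]
  constructor
  · rintro ⟨y, hya, hy, huy⟩
    have := rank_le_of_le huy
    simp only [KL, mem_ofPred_eq] at hya ⊢
    split_ifs <;> omega
  · intro hu
    have := u.2.1
    simp only [KL, mem_ofPred_eq] at hu
    split_ifs at hu with hba
    · obtain ⟨y, hy, huy⟩ := exists_rank_eq_and_le_iff.mpr ⟨hu, by omega⟩
      exact ⟨y, by simp [KL]; omega, hy, huy⟩
    · omega

end levels

def revStep (N : ℕ) (p : ℕ × ℕ) : ℕ × ℕ :=
  if p.1 < N then (p.1 + 1, if p.2 < p.1 then p.2 + 1 else 0)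
  else if p.2 < p.1 then (p.2 + 1, p.2 + 1) else (0, 0)

section revStep

variable {N : ℕ}

theorem mapsTo_revStep : MapsTo (revStep N) (Iic (N, N)) (Iic (N, N)) := by
  rintro ⟨a, b⟩ ⟨ha, hb⟩
  constructor <;> dsimp only [revStep] <;> split_ifs <;> dsimp only at ha hb ⊢ <;> omega

theorem revStep_iterate_diag_of_le {j k : ℕ} (hk₀ : 0 < k) (hk : j + k ≤ N) :
    (revStep N)^[k] (j, j) = (j + k, k - 1) := by
  induction k with
  | zero => omega
  | succ k ih =>
    rw [iterate_succ_apply']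
    rcases Nat.eq_zero_or_pos k with rfl | hk₀
    · simp [revStep]; omega
    · rw [ih hk₀ (by omega), revStep, if_pos (by omega), if_pos (by omega)]
      simp; omega

theorem revStep_iterate_diag {j : ℕ} (hj : j ≤ N) :
    (revStep N)^[N - j + 1] (j, j) = (N - j, N - j) := by
  rw [iterate_succ_apply']
  rcases hj.eq_or_lt with rfl | hj
  · simp [revStep]
  · rw [revStep_iterate_diag_of_le (by omega) (by omega), revStep, if_neg (by omega),
      if_pos (by omega)]
    simp; omega

theorem revStep_iterate_diag_ne {i k : ℕ} (hi : 2 * i < N) (hk₀ : 0 < k) (hk : k < N + 2) :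
    (revStep N)^[k] (i, i) ≠ (i, i) := by
  rcases Nat.lt_or_ge (N - i) k with hlt | hle
  · obtain ⟨m, rfl⟩ := Nat.exists_eq_add_of_le hlt
    rw [add_comm, iterate_add_apply, revStep_iterate_diag (by omega)]
    rcases Nat.eq_zero_or_pos m with rfl | hm
    · simp; omega
    · rw [revStep_iterate_diag_of_le hm (by omega)]
      simp; omega
  · rw [revStep_iterate_diag_of_le hk₀ (by omega)]
    simp; omega

theorem minimalPeriod_revStep_diag {i : ℕ} (hi : 2 * i < N) :
    minimalPeriod (revStep N) (i, i) = N + 2 := by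
  have hper : IsPeriodicPt (revStep N) (N + 2) (i, i) := by
    change (revStep N)^[N + 2] (i, i) = (i, i)
    rw [show N + 2 = (N - (N - i) + 1) + (N - i + 1) by omega, iterate_add_apply,
      revStep_iterate_diag (by omega), revStep_iterate_diag (by omega),
      Nat.sub_sub_self (by omega : i ≤ N)]
  refine le_antisymm (hper.minimalPeriod_le (by omega)) (not_lt.mp fun hlt => ?_)
  exact revStep_iterate_diag_ne hi (hper.minimalPeriod_pos (by omega)) hlt iterate_minimalPeriod

end revStep

def levelPair (n : ℕ) (p : ℕ × ℕ) : Set (Fin 2 × KType n) :=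
  pairSet (KL n p.1) (KL n p.2)

section levelPair

variable {n : ℕ}

theorem levelPair_injOn : InjOn (levelPair n) (Iic (2 * n - 1, 2 * n - 1)) := by
  rintro p ⟨ha, hb⟩ q ⟨ha', hb'⟩ h
  obtain ⟨h₁, h₂⟩ := pairSet_inj.mp h
  exact Prod.ext (KL_injOn ha ha' h₁) (KL_injOn hb hb' h₂)

theorem XRev_levelPair {p : ℕ × ℕ} (hp : p.1 ≤ 2 * n - 1) :
    XRev (levelPair n p) = levelPair n (revStep (2 * n - 1) p) := by
  rw [levelPair, XRev_pairSet (isLowerSet_KL _), XRev_KL, setOf_le_minimal_compl_KL_mem_KL hp,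
    KL_union_KL, levelPair]
  congr 2 <;> dsimp only [revStep] <;> split_ifs <;> omega

theorem XRev_iterate_levelPair {p : ℕ × ℕ} (hp : p ∈ Iic (2 * n - 1, 2 * n - 1)) (k : ℕ) :
    XRev^[k] (levelPair n p) = levelPair n ((revStep (2 * n - 1))^[k] p) := by
  induction k generalizing p with
  | zero => rfl
  | succ k ih =>
    rw [iterate_succ_apply, iterate_succ_apply, XRev_levelPair hp.1, ih (mapsTo_revStep hp)]

theorem minimalPeriod_XRev_levelPair {p : ℕ × ℕ} (hp : p ∈ Iic (2 * n - 1, 2 * n - 1)) :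
    minimalPeriod XRev (levelPair n p) = minimalPeriod (revStep (2 * n - 1)) p :=
  minimalPeriod_eq_minimalPeriod_iff.mpr fun k => by
    rw [IsPeriodicPt, IsFixedPt, XRev_iterate_levelPair hp]
    exact levelPair_injOn.eq_iff (mapsTo_revStep.iterate k hp) hp

end levelPair

/-- For `P = [2] × K_{n-1}` and `0 ≤ i ≤ n-1`, the `𝔛`-orbit of the lower set
`(L_i, L_i)` has exactly `2n+1` elements; moreover
`𝔛^[2n+1] (L_i, L_i) = (L_i, L_i)`. -/
theorem stmt11 (n : ℕ) (hn : 2 ≤ n) (i : ℕ) (hi : i ≤ n - 1) :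
    (XOrbit (pairSet (KL n i) (KL n i))).ncard = 2 * n + 1 ∧
      XRev^[2 * n + 1] (pairSet (KL n i) (KL n i)) = pairSet (KL n i) (KL n i) := by
  have hperiod : minimalPeriod XRev (pairSet (KL n i) (KL n i)) = 2 * n + 1 := by
    change minimalPeriod XRev (levelPair n (i, i)) = _
    rw [minimalPeriod_XRev_levelPair ⟨by dsimp; omega, by dsimp; omega⟩,
      minimalPeriod_revStep_diag (by omega)]
    omega
  refine ⟨?_, hperiod ▸ iterate_minimalPeriod⟩
  rw [XOrbit, ncard_setOf_iterate_eq_minimalPeriod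
    (minimalPeriod_pos_iff_mem_periodicPts.mp (by omega)), hperiod]
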